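/- Let H ∈ C(ℝⁿ×ℝⁿ) satisfy (A2)–(A4) and condition (A8)₊ with constants η₀ > 0 and θ₀ > 1 (we may assume θ₀ < 2). Then H satisfies (A7)₊: for every η ∈ (0, η₀/2), every θ ∈ (1,θ₀) and all x, p, q ∈ ℝⁿ with H(x,p) ≤ 0 and H(x,q) ≥ η, one has H(x, p + θ(q−p)) > θη. -/

import Mathlib

/-!
Restrict `H(x, ·)` to the line through `p` and `q` and move the origin to a zero `p'` of
`H(x, ·)` on the segment `[p, q]`. Along the rays from `p'`, (A8)₊ says that
`φ(t) = H(x, p' + t (q - p'))` satisfies `φ(θ c) > θ φ(c)` whenever `0 < φ(c) < η₀` and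
`θ ∈ (1, θ₀)`. A continuous induction then keeps `φ(r)` above `min(r η, M)` for `r ≥ 1` and any
cap `M < η₀`: where `φ ≥ η₀` continuity alone keeps it above `M`. Since `θ₀ < 2` and
`η < η₀ / 2`, the cap `M = θ η` is admissible, and `p + θ (q - p) = p' + r (q - p')` with `r ≥ θ`.
-/

noncomputable section

open Filter Set Topology

namespace HJpaper

/-- Points of `ℝⁿ` (with the Euclidean norm). -/
abbrev E (n : ℕ) := EuclideanSpace ℝ (Fin n)

/-- The vector of `ℝⁿ` with integer coordinates `k`. -/
def lat (n : ℕ) (k : Fin n → ℤ) : E n :=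
  (WithLp.equiv 2 (Fin n → ℝ)).symm fun i => (k i : ℝ)

/-- `f : ℝⁿ → ℝ` is `ℤⁿ`-periodic. -/
def Per {n : ℕ} (f : E n → ℝ) : Prop :=
  ∀ (x : E n) (k : Fin n → ℤ), f (x + lat n k) = f x

/-- (A2): continuity of the Hamiltonian. -/
def ContH {n : ℕ} (H : E n → E n → ℝ) : Prop :=
  Continuous fun q : E n × E n => H q.1 q.2

/-- (A3): `ℤⁿ`-periodicity of the Hamiltonian in `x`. -/
def PerH {n : ℕ} (H : E n → E n → ℝ) : Prop :=
  ∀ p : E n, Per fun x => H x p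

/-- (A4): coercivity of the Hamiltonian. -/
def Coercive {n : ℕ} (H : E n → E n → ℝ) : Prop :=
  ∀ M : ℝ, ∃ r : ℝ, ∀ x p : E n, r ≤ ‖p‖ → M ≤ H x p

/-- viscosity subsolution of `u_t + H(x, D_x u) = 0` in `Q = ℝⁿ × (0,∞)`. -/
def CPSub {n : ℕ} (H : E n → E n → ℝ) (u : E n → ℝ → ℝ) : Prop :=
  ∀ φ : E n → ℝ → ℝ, ContDiff ℝ 1 (fun q : E n × ℝ => φ q.1 q.2) →
    ∀ (x : E n) (t : ℝ), 0 < t →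
      IsLocalMaxOn (fun q : E n × ℝ => u q.1 q.2 - φ q.1 q.2)
        {q : E n × ℝ | 0 < q.2} (x, t) →
      deriv (fun s => φ x s) t + H x (gradient (fun y => φ y t) x) ≤ 0

/-- viscosity supersolution of `u_t + H(x, D_x u) = 0` in `Q = ℝⁿ × (0,∞)`. -/
def CPSuper {n : ℕ} (H : E n → E n → ℝ) (u : E n → ℝ → ℝ) : Prop :=
  ∀ φ : E n → ℝ → ℝ, ContDiff ℝ 1 (fun q : E n × ℝ => φ q.1 q.2) →
    ∀ (x : E n) (t : ℝ), 0 < t →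
      IsLocalMinOn (fun q : E n × ℝ => u q.1 q.2 - φ q.1 q.2)
        {q : E n × ℝ | 0 < q.2} (x, t) →
      0 ≤ deriv (fun s => φ x s) t + H x (gradient (fun y => φ y t) x)

/-- viscosity solution of `u_t + H(x, D_x u) = 0` in `Q`. -/
def CPSol {n : ℕ} (H : E n → E n → ℝ) (u : E n → ℝ → ℝ) : Prop :=
  CPSub H u ∧ CPSuper H u

/-- `u` is a solution of the Cauchy problem (CP) for the data `u₀`: it is uniformly
continuous on `ℝⁿ × [0,∞)`, `ℤⁿ`-periodic in `x`, a viscosity solution of the PDE in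
`Q = ℝⁿ × (0,∞)`, and attains the initial data (continuously, by uniform continuity). -/
def IsCP {n : ℕ} (H : E n → E n → ℝ) (u₀ : E n → ℝ) (u : E n → ℝ → ℝ) : Prop :=
  UniformContinuousOn (fun q : E n × ℝ => u q.1 q.2) {q : E n × ℝ | 0 ≤ q.2} ∧
  (∀ t : ℝ, 0 ≤ t → Per fun x => u x t) ∧
  CPSol H u ∧
  ∀ x : E n, u x 0 = u₀ x

/-- viscosity subsolution of `H(x, Dv(x)) ≤ g(x)` in `ℝⁿ`. -/
def StatSub {n : ℕ} (H : E n → E n → ℝ) (g : E n → ℝ) (v : E n → ℝ) : Prop :=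
  ∀ φ : E n → ℝ, ContDiff ℝ 1 φ →
    ∀ x : E n, IsLocalMax (fun y => v y - φ y) x → H x (gradient φ x) ≤ g x

/-- viscosity supersolution of `H(x, Dv(x)) ≥ g(x)` in `ℝⁿ`. -/
def StatSuper {n : ℕ} (H : E n → E n → ℝ) (g : E n → ℝ) (v : E n → ℝ) : Prop :=
  ∀ φ : E n → ℝ, ContDiff ℝ 1 φ →
    ∀ x : E n, IsLocalMin (fun y => v y - φ y) x → g x ≤ H x (gradient φ x)

/-- viscosity solution of `H(x, Dv(x)) = c` in `ℝⁿ`. -/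
def StatSol {n : ℕ} (H : E n → E n → ℝ) (c : ℝ) (v : E n → ℝ) : Prop :=
  StatSub H (fun _ => c) v ∧ StatSuper H (fun _ => c) v

/-- Lipschitz continuity (with some constant). -/
def IsLip {n : ℕ} (f : E n → ℝ) : Prop := ∃ K : NNReal, LipschitzWith K f

/-- (A5): the additive eigenvalue is zero, i.e. `H(x,Dv)=0` has a Lipschitz
`ℤⁿ`-periodic viscosity solution. -/
def A5 {n : ℕ} (H : E n → E n → ℝ) : Prop :=
  ∃ v : E n → ℝ, IsLip v ∧ Per v ∧ StatSol H 0 v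

/-- condition (A6)₊. -/
def A6plus {n : ℕ} (H : E n → E n → ℝ) : Prop :=
  ∃ η₀ > (0:ℝ), ∃ θ₀ > (1:ℝ),
    ∀ η ∈ Set.Ioo (0:ℝ) η₀, ∀ θ ∈ Set.Ioo (1:ℝ) θ₀, ∃ ψ > (0:ℝ),
      ∀ x p q : E n, H x p ≤ 0 → η ≤ H x q → η * θ + ψ ≤ H x (p + θ • (q - p))

/-- condition (A6)₋. -/
def A6minus {n : ℕ} (H : E n → E n → ℝ) : Prop :=
  ∃ η₀ > (0:ℝ), ∃ θ₀ > (1:ℝ),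
    ∀ η ∈ Set.Ioo (0:ℝ) η₀, ∀ θ ∈ Set.Ioo (1:ℝ) θ₀, ∃ ψ > (0:ℝ),
      ∀ x p q : E n, H x p ≤ 0 → -η ≤ H x q → -(η * θ) + ψ ≤ H x (p + θ • (q - p))

/-- the modulus `ω_{H,R}`. -/
def omegaH {n : ℕ} (H : E n → E n → ℝ) (R r : ℝ) : ℝ :=
  sSup {a : ℝ | ∃ x p q : E n, ‖p‖ ≤ R ∧ ‖q‖ ≤ R ∧ ‖p - q‖ ≤ r ∧ a = |H x p - H x q|}

/-- `w(x,t) = sup_{s ≥ t} [u(x,t) − v₀(x) − θ(u(x,s) − v₀(x) + η(s−t))]`. -/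
def wPlus {n : ℕ} (u : E n → ℝ → ℝ) (v₀ : E n → ℝ) (η θ : ℝ) (x : E n) (t : ℝ) : ℝ :=
  sSup {a : ℝ | ∃ s : ℝ, t ≤ s ∧ a = u x t - v₀ x - θ * (u x s - v₀ x + η * (s - t))}

/-- `w(x,t) = max_{0 ≤ s ≤ t} [u(x,t) − v₀(x) − θ(u(x,s) − v₀(x) − η(s−t))]`. -/
def wMinus {n : ℕ} (u : E n → ℝ → ℝ) (v₀ : E n → ℝ) (η θ : ℝ) (x : E n) (t : ℝ) : ℝ :=
  sSup {a : ℝ | ∃ s : ℝ, 0 ≤ s ∧ s ≤ t ∧ a = u x t - v₀ x - θ * (u x s - v₀ x - η * (s - t))}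

/-- (A8)₊ read on the line `t ↦ H(x, p + t v)` through a zero `p` of `H(x, ·)`. -/
def RayGrowth (η₀ θ₀ : ℝ) (φ : ℝ → ℝ) : Prop :=
  ∀ c, 0 < φ c → φ c < η₀ → ∀ θ ∈ Ioo 1 θ₀, θ * φ c < φ (θ * c)

namespace RayGrowth

variable {η₀ θ₀ η M : ℝ} {φ : ℝ → ℝ}

theorem min_lt_of_min_le (hφ : RayGrowth η₀ θ₀ φ) (hη : 0 < η) (hM : 0 < M) {c : ℝ}
    (hc : 0 < c) (hle : min (c * η) M ≤ φ c) (hlt : φ c < η₀) {θ : ℝ} (hθ : θ ∈ Ioo 1 θ₀) :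
    min (θ * c * η) M < φ (θ * c) := by
  have hpos : 0 < min (c * η) M := lt_min (by positivity) hM
  calc min (θ * c * η) M ≤ θ * min (c * η) M := by
        rw [mul_min_of_nonneg _ _ (by linarith [hθ.1]), mul_assoc]
        exact min_le_min_left _ (le_mul_of_one_le_left hM.le hθ.1.le)
    _ ≤ θ * φ c := by gcongr; linarith [hθ.1]
    _ < φ (θ * c) := hφ c (hpos.trans_le hle) hlt θ hθ

theorem min_le (hφ : RayGrowth η₀ θ₀ φ) (hcont : Continuous φ) (hη : 0 < η) (hM : 0 < M)
    (hMη₀ : M < η₀) (hθ₀ : 1 < θ₀) (h₁ : η ≤ φ 1) {r : ℝ} (hr : 1 ≤ r) : min (r * η) M ≤ φ r := by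
  set S := {t | min (t * η) M ≤ φ t}
  have hS : IsClosed S := isClosed_le (by fun_prop) hcont
  refine IsClosed.Icc_subset_of_forall_mem_nhdsWithin (hS.inter isClosed_Icc)
    (by simpa [S] using min_le_of_left_le h₁) ?_ ⟨hr, le_rfl⟩
  rintro c ⟨hcS, hc1, -⟩
  have hc : 0 < c := by linarith
  rcases lt_or_ge (φ c) η₀ with hlt | hge
  · refine mem_of_superset (Ioo_mem_nhdsGT (lt_mul_of_one_lt_left hc hθ₀)) fun t ht => ?_
    have hθ : t / c ∈ Ioo 1 θ₀ := ⟨by rw [lt_div_iff₀ hc]; linarith [ht.1], by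
      rw [div_lt_iff₀ hc]; exact ht.2⟩
    have := hφ.min_lt_of_min_le hη hM hc hcS hlt hθ
    rw [div_mul_cancel₀ t hc.ne'] at this
    exact this.le
  · refine mem_nhdsWithin_of_mem_nhds (mem_of_superset
      (hcont.continuousAt.eventually (lt_mem_nhds (hMη₀.trans_le hge))) fun t (ht : M < φ t) => ?_)
    exact (min_le_right _ _).trans ht.le

theorem min_lt (hφ : RayGrowth η₀ θ₀ φ) (hcont : Continuous φ) (hη : 0 < η) (hM : 0 < M)
    (hMη₀ : M < η₀) (hθ₀ : 1 < θ₀) (h₁ : η ≤ φ 1) {r : ℝ} (hr : 1 < r) :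
    min (r * η) M < φ r := by
  rcases le_or_gt η₀ (φ r) with hge | hlt
  · exact (min_le_right _ _).trans_lt (hMη₀.trans_le hge)
  have hr₀ : 0 < r := by linarith
  have hnear : ∀ᶠ c in 𝓝[<] r, 1 < c ∧ r / θ₀ < c ∧ φ c < η₀ :=
    nhdsWithin_le_nhds <| (lt_mem_nhds hr).and <| (lt_mem_nhds (div_lt_self hr₀ hθ₀)).and <|
      hcont.continuousAt.eventually (gt_mem_nhds hlt)
  obtain ⟨c, ⟨hc1, hcr, hcφ⟩, hc⟩ := (hnear.and self_mem_nhdsWithin).exists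
  have hc₀ : 0 < c := by linarith
  have hθ : r / c ∈ Ioo 1 θ₀ := ⟨(one_lt_div hc₀).2 hc, (div_lt_iff₀ hc₀).2 (by
    rwa [div_lt_iff₀ (by linarith), mul_comm] at hcr)⟩
  have := hφ.min_lt_of_min_le hη hM hc₀ (hφ.min_le hcont hη hM hMη₀ hθ₀ h₁ hc1.le) hcφ hθ
  rwa [div_mul_cancel₀ r hc₀.ne'] at this

end RayGrowth

theorem ContH.continuous_line {n : ℕ} {H : E n → E n → ℝ} (hH : ContH H) (x p v : E n) :
    Continuous fun t : ℝ => H x (p + t • v) :=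
  hH.comp (continuous_const.prodMk (continuous_const.add (continuous_id.smul continuous_const)))

theorem rayGrowth_of_A8plus {n : ℕ} {H : E n → E n → ℝ} {η₀ θ₀ : ℝ}
    (hA8 : ∀ η ∈ Set.Ioo (0:ℝ) η₀, ∀ θ ∈ Set.Ioo (1:ℝ) θ₀, ∃ ψ > (0:ℝ),
      ∀ x p q : E n, H x p = 0 → H x q = η → η * θ + ψ ≤ H x (p + θ • (q - p)))
    {x p : E n} (hp : H x p = 0) (v : E n) :
    RayGrowth η₀ θ₀ fun t => H x (p + t • v) := by
  intro c hc₀ hcη₀ θ hθ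
  obtain ⟨ψ, hψ, hgrow⟩ := hA8 _ ⟨hc₀, hcη₀⟩ θ hθ
  have h := hgrow x p (p + c • v) hp rfl
  rw [show p + θ • (p + c • v - p) = p + (θ * c) • v by module] at h
  linarith

theorem stmt_18_general {n : ℕ} (H : E n → E n → ℝ)
    (hHc : ContH H)
    (η₀ θ₀ : ℝ) (hθ₀2 : θ₀ < 2)
    (hA8 : ∀ η ∈ Set.Ioo (0:ℝ) η₀, ∀ θ ∈ Set.Ioo (1:ℝ) θ₀, ∃ ψ > (0:ℝ),
      ∀ x p q : E n, H x p = 0 → H x q = η → η * θ + ψ ≤ H x (p + θ • (q - p))) :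
    ∀ η : ℝ, 0 < η → η < η₀ / 2 → ∀ θ ∈ Set.Ioo (1:ℝ) θ₀,
      ∀ x p q : E n, H x p ≤ 0 → η ≤ H x q → θ * η < H x (p + θ • (q - p)) := by
  intro η hη hηη₀ θ hθ x p q hp hq
  obtain ⟨s, ⟨hs0, hs1'⟩, hs⟩ : ∃ s ∈ Icc (0 : ℝ) 1, H x (p + s • (q - p)) = 0 :=
    intermediate_value_Icc zero_le_one (hHc.continuous_line x p (q - p)).continuousOn
      ⟨by simpa using hp, by simpa using hη.le.trans hq⟩
  have hs1 : s < 1 := hs1'.lt_of_ne (by rintro rfl; simp at hs; linarith)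
  set p' := p + s • (q - p)
  set r := (θ - s) / (1 - s)
  have hθr : θ ≤ r := by
    rw [le_div_iff₀ (by linarith)]; nlinarith [mul_nonneg hs0 (sub_nonneg.2 hθ.1.le)]
  have hline : p + θ • (q - p) = p' + r • (q - p') := by
    have hθs : θ = s + r * (1 - s) := by rw [div_mul_cancel₀ _ (sub_ne_zero.2 hs1.ne')]; ring
    rw [hθs]; module
  have hθη : θ * η < η₀ := by nlinarith [hθ.2]
  have key := (rayGrowth_of_A8plus hA8 hs (q - p')).min_lt
    (hHc.continuous_line x p' (q - p')) hη (M := θ * η) (mul_pos (by linarith [hθ.1]) hη) hθη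
    (by linarith [hθ.1, hθ.2]) (by simpa [p'] using hq) (hθ.1.trans_le hθr)
  rwa [min_eq_right (mul_le_mul_of_nonneg_right hθr hη.le), ← hline] at key

/-- (A8)₊ implies (A7)₊ (for `η < η₀/2` and `θ ∈ (1,θ₀)`, `θ₀ < 2`). -/
theorem stmt_18 {n : ℕ} (H : E n → E n → ℝ)
    (hHc : ContH H) (hHp : PerH H) (hco : Coercive H)
    (η₀ θ₀ : ℝ) (hη₀ : 0 < η₀) (hθ₀ : 1 < θ₀) (hθ₀2 : θ₀ < 2)
    (hA8 : ∀ η ∈ Set.Ioo (0:ℝ) η₀, ∀ θ ∈ Set.Ioo (1:ℝ) θ₀, ∃ ψ > (0:ℝ),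
      ∀ x p q : E n, H x p = 0 → H x q = η → η * θ + ψ ≤ H x (p + θ • (q - p))) :
    ∀ η : ℝ, 0 < η → η < η₀ / 2 → ∀ θ ∈ Set.Ioo (1:ℝ) θ₀,
      ∀ x p q : E n, H x p ≤ 0 → η ≤ H x q → θ * η < H x (p + θ • (q - p)) :=
  stmt_18_general H hHc η₀ θ₀ hθ₀2 hA8
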